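/- arXiv:2310.10682 — 2 statements merged into one kernel-verified Lean document; each statement's English description precedes it below -/
import Mathlib

section
/- For every n > 2, the number g_n of orbits of the cyclic shift action of Z/nZ on {0,1}^n is even. -/
open Finset

/-- Cyclic shift on `F_2^n`: `(shift x) i = x (i+1)`. -/
def shift (n : ℕ) (x : Fin n → ZMod 2) : Fin n → ZMod 2 := fun i => x (finRotate n i)

/-- Dot product on `F_2^n`. -/
def dot (n : ℕ) (x y : Fin n → ZMod 2) : ZMod 2 := ∑ i, x i * y i

/-- `(-1)^b` as an integer. -/
def sgn (b : ZMod 2) : ℤ := if b = 0 then 1 else -1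

/-- The orbit of `x` under cyclic shifts. -/
def orbit (n : ℕ) (x : Fin n → ZMod 2) : Finset (Fin n → ZMod 2) :=
  Finset.image (fun k : Fin n => (shift n)^[(k : ℕ)] x) Finset.univ

/-- The set of orbits of the cyclic shift action on `F_2^n`. -/
def orbits (n : ℕ) : Finset (Finset (Fin n → ZMod 2)) :=
  Finset.image (orbit n) Finset.univ

/-- `g_n`, the number of orbits. -/
def numOrbits (n : ℕ) : ℕ := (orbits n).card

-- T1
lemma two_pow_fact_dvd_two_mul_totient (t : ℕ) (ht : t ≠ 0) :
    2 ^ (t.factorization 2) ∣ 2 * Nat.totient t := by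
  rcases Nat.eq_zero_or_pos (t.factorization 2) with h | h
  · simp [h]
  · have hp : Nat.Prime 2 := Nat.prime_two
    have hco : Nat.Coprime (2 ^ (t.factorization 2)) (t / 2 ^ (t.factorization 2)) :=
      Nat.Coprime.pow_left _ (Nat.coprime_ordCompl hp ht)
    have hsplit : t = 2 ^ (t.factorization 2) * (t / 2 ^ (t.factorization 2)) :=
      (Nat.ordProj_mul_ordCompl_eq_self t 2).symm
    calc 2 ^ (t.factorization 2)
        = 2 * (2 ^ (t.factorization 2 - 1) * 1) := by
          rw [mul_one, ← pow_succ']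
          congr 1
          omega
      _ ∣ 2 * (Nat.totient (2 ^ (t.factorization 2)) * Nat.totient (t / 2 ^ (t.factorization 2))) := by
          apply mul_dvd_mul_left
          apply mul_dvd_mul
          · rw [Nat.totient_prime_pow hp h]
            exact Dvd.intro _ rfl
          · exact Nat.one_dvd _
      _ = 2 * Nat.totient t := by
          rw [← Nat.totient_mul hco, ← hsplit]

-- T2
lemma two_pow_fact_succ_dvd_two_mul_totient (t : ℕ) (ht : t ≠ 0)
    (hodd : t / 2 ^ (t.factorization 2) ≠ 1) :
    2 ^ (t.factorization 2 + 1) ∣ 2 * Nat.totient t := by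
  obtain ⟨j, hj⟩ : ∃ j, t.factorization 2 = j := ⟨_, rfl⟩
  obtain ⟨u, hu⟩ : ∃ u, t / 2 ^ j = u := ⟨_, rfl⟩
  rw [hj] at hodd ⊢
  rw [hu] at hodd
  have hp : Nat.Prime 2 := Nat.prime_two
  have hco : Nat.Coprime (2 ^ j) u := by
    rw [← hu, ← hj]; exact Nat.Coprime.pow_left _ (Nat.coprime_ordCompl hp ht)
  have hsplit : t = 2 ^ j * u := by
    rw [← hu, ← hj]; exact (Nat.ordProj_mul_ordCompl_eq_self t 2).symm
  have hu0 : u ≠ 0 := by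
    intro h; rw [h, mul_zero] at hsplit; exact ht hsplit
  have hund : ¬ 2 ∣ u := by
    rw [← hu, ← hj]; exact Nat.not_dvd_ordCompl hp ht
  have hu3 : 2 < u := by omega
  have heu : Even (Nat.totient u) := Nat.totient_even hu3
  have h2u : 2 ∣ Nat.totient u := heu.two_dvd
  have key : 2 ^ j ∣ 2 * Nat.totient (2 ^ j) := by
    rcases Nat.eq_zero_or_pos j with h | h
    · simp [h]
    · rw [Nat.totient_prime_pow hp h]
      calc 2 ^ j = 2 * (2 ^ (j-1) * 1) := by rw [mul_one, ← pow_succ']; congr 1; omega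
        _ ∣ 2 * (2 ^ (j-1) * (2-1)) := by norm_num
  calc 2 ^ (j + 1) = 2 ^ j * 2 := by ring
    _ ∣ (2 * Nat.totient (2 ^ j)) * Nat.totient u := mul_dvd_mul key h2u
    _ = 2 * Nat.totient t := by rw [mul_assoc, ← Nat.totient_mul hco, ← hsplit]

-- d ≥ 3 implies d ≥ v2(d) + 2
lemma three_le_fact (d : ℕ) (hd : 3 ≤ d) : d.factorization 2 + 2 ≤ d := by
  set j := d.factorization 2 with hj
  have h2 : 2 ^ j ∣ d := Nat.ordProj_dvd d 2
  rcases Nat.lt_or_ge j 2 with h | h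
  · omega
  · have key : ∀ i, 2 ≤ i → i + 2 ≤ 2 ^ i := by
      intro i hi
      induction i with
      | zero => omega
      | succ k ih =>
        rcases Nat.lt_or_ge k 2 with hk | hk
        · interval_cases k
          · omega
          · norm_num
        · have := ih hk; rw [pow_succ]; omega
    have h1 := key j h
    have := Nat.le_of_dvd (by omega) h2
    omega

lemma term_dvd_big (n d : ℕ) (hn0 : n ≠ 0) (hd : d ∣ n) (hd3 : 3 ≤ d) :
    2 ^ (n.factorization 2 + 1) ∣ Nat.totient (n / d) * 2 ^ d := by
  set a := n.factorization 2 with ha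
  set j := d.factorization 2 with hjdef
  have hd0 : d ≠ 0 := by omega
  have ht0 : n / d ≠ 0 :=
    Nat.div_ne_zero_iff.mpr ⟨hd0, Nat.le_of_dvd (Nat.pos_of_ne_zero hn0) hd⟩
  have hja : j ≤ a := by
    rw [ha, hjdef]
    exact (Nat.factorization_le_iff_dvd hd0 hn0).mpr hd 2
  have hfd : (n / d).factorization 2 = a - j := by
    rw [Nat.factorization_div hd]; simp [ha, hjdef]
  have h1 := two_pow_fact_dvd_two_mul_totient (n / d) ht0
  rw [hfd] at h1
  have hdj : j + 2 ≤ d := three_le_fact d hd3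
  have key : 2 * 2 ^ (a + 1) ∣ 2 * (Nat.totient (n / d) * 2 ^ d) := by
    calc 2 * 2 ^ (a+1) = 2 ^ (a - j) * 2 ^ (j + 2) := by
          rw [← pow_add]; rw [show (2:ℕ) * 2^(a+1) = 2^(a+2) by ring]; congr 1; omega
      _ ∣ (2 * Nat.totient (n / d)) * 2 ^ d :=
          mul_dvd_mul h1 (pow_dvd_pow 2 hdj)
      _ = 2 * (Nat.totient (n / d) * 2 ^ d) := by ring
  exact (mul_dvd_mul_iff_left (two_ne_zero)).mp key

lemma term_dvd_small (n d : ℕ) (hn0 : n ≠ 0) (hd : d ∣ n) (hd0 : d ≠ 0)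
    (hodd : (n / d) / 2 ^ ((n / d).factorization 2) ≠ 1) :
    2 ^ (n.factorization 2 + 1) ∣ Nat.totient (n / d) * 2 ^ d := by
  set a := n.factorization 2 with ha
  set j := d.factorization 2 with hjdef
  have ht0 : n / d ≠ 0 :=
    Nat.div_ne_zero_iff.mpr ⟨hd0, Nat.le_of_dvd (Nat.pos_of_ne_zero hn0) hd⟩
  have hja : j ≤ a := by
    rw [ha, hjdef]
    exact (Nat.factorization_le_iff_dvd hd0 hn0).mpr hd 2
  have hfd : (n / d).factorization 2 = a - j := by
    rw [Nat.factorization_div hd]; simp [ha, hjdef]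
  have h1 := two_pow_fact_succ_dvd_two_mul_totient (n / d) ht0 hodd
  rw [hfd] at h1
  have hdj : j + 1 ≤ d := by
    have h2 : 2 ^ j ∣ d := by rw [hjdef]; exact Nat.ordProj_dvd d 2
    have := Nat.le_of_dvd (Nat.pos_of_ne_zero hd0) h2
    have := Nat.lt_two_pow_self (n := j)
    omega
  have key : 2 * 2 ^ (a + 1) ∣ 2 * (Nat.totient (n / d) * 2 ^ d) := by
    calc 2 * 2 ^ (a+1) = 2 ^ (a - j + 1) * 2 ^ (j + 1) := by
          rw [← pow_add]; rw [show (2:ℕ) * 2^(a+1) = 2^(a+2) by ring]; congr 1; omega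
      _ ∣ (2 * Nat.totient (n / d)) * 2 ^ d :=
          mul_dvd_mul h1 (pow_dvd_pow 2 hdj)
      _ = 2 * (Nat.totient (n / d) * 2 ^ d) := by ring
  exact (mul_dvd_mul_iff_left (two_ne_zero)).mp key

lemma sum_gcd_pow_eq (n : ℕ) (hn0 : n ≠ 0) :
    ∑ j ∈ range n, 2 ^ (Nat.gcd n j) =
      ∑ d ∈ n.divisors, Nat.totient (n / d) * 2 ^ d := by
  rw [← Finset.sum_fiberwise_of_maps_to (g := fun j => Nat.gcd n j) (t := n.divisors)
      (fun x _ => Nat.mem_divisors.mpr ⟨Nat.gcd_dvd_left n x, hn0⟩)]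
  refine Finset.sum_congr rfl fun d hd => ?_
  have : ∀ x ∈ {j ∈ range n | Nat.gcd n j = d}, 2 ^ (Nat.gcd n x) = 2 ^ d := by
    intro x hx
    rw [(Finset.mem_filter.mp hx).2]
  rw [Finset.sum_congr rfl this, Finset.sum_const, smul_eq_mul,
    ← Nat.totient_div_of_dvd (Nat.dvd_of_mem_divisors hd)]

lemma even_of_burnside (n g : ℕ) (hn : 2 < n)
    (h : n * g = ∑ j ∈ range n, 2 ^ (Nat.gcd n j)) : Even g := by
  have hn0 : n ≠ 0 := by omega
  rcases Nat.even_or_odd n with hne | hno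
  swap
  · -- n odd
    have hS : 2 ∣ ∑ j ∈ range n, 2 ^ (Nat.gcd n j) := by
      apply Finset.dvd_sum
      intro j hj
      have : Nat.gcd n j ≠ 0 := fun hc => hn0 (Nat.eq_zero_of_gcd_eq_zero_left hc)
      exact dvd_pow_self 2 this
    rw [← h] at hS
    have hco : Nat.Coprime 2 n := (Nat.coprime_two_left).mpr hno
    exact (Nat.Coprime.dvd_of_dvd_mul_left hco hS).elim fun c hc => ⟨c, by omega⟩
  · -- n even
    set a := n.factorization 2 with ha
    have ha1 : 1 ≤ a := by
      rw [ha]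
      exact (Nat.Prime.factorization_pos_of_dvd Nat.prime_two hn0 hne.two_dvd)
    have hpa : 2 ^ a ∣ n := Nat.ordProj_dvd n 2
    -- main claim
    have claim : 2 ^ (a + 1) ∣ ∑ j ∈ range n, 2 ^ (Nat.gcd n j) := by
      rw [sum_gcd_pow_eq n hn0]
      by_cases hm : n / 2 ^ a = 1
      · -- n = 2 ^ a
        have hna : n = 2 ^ a := by
          have := Nat.ordProj_mul_ordCompl_eq_self n 2
          rw [← ha] at this
          rw [← this, hm, mul_one]
        have ha2 : 2 ≤ a := by
          by_contra hc
          interval_cases a <;> omega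
        have h1m : 1 ∈ n.divisors := Nat.one_mem_divisors.mpr hn0
        have h2m : 2 ∈ n.divisors.erase 1 := by
          refine Finset.mem_erase.mpr ⟨by norm_num, Nat.mem_divisors.mpr ⟨hne.two_dvd, hn0⟩⟩
        rw [← Finset.add_sum_erase _ _ h1m, ← Finset.add_sum_erase _ _ h2m]
        rw [← add_assoc]
        apply dvd_add
        · -- the two exceptional terms
          have e1 : Nat.totient (n / 1) * 2 ^ 1 = 2 ^ a := by
            rw [Nat.div_one, hna, Nat.totient_prime_pow Nat.prime_two (by omega)]
            rw [pow_one, show (2:ℕ) - 1 = 1 by rfl, mul_one, ← pow_succ]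
            congr 1; omega
          have e2 : Nat.totient (n / 2) * 2 ^ 2 = 2 ^ a := by
            have : n / 2 = 2 ^ (a - 1) := by
              rw [hna, ← Nat.pow_div (by omega) (by norm_num), pow_one]
            rw [this, Nat.totient_prime_pow Nat.prime_two (by omega),
              show (2:ℕ) - 1 = 1 by rfl, mul_one, ← pow_add]
            congr 1; omega
          rw [e1, e2, ← two_mul, ← pow_succ']
        · apply Finset.dvd_sum
          intro d hd
          have hd' := Finset.mem_erase.mp hd
          have hd'' := Finset.mem_erase.mp hd'.2
          exact term_dvd_big n d hn0 (Nat.dvd_of_mem_divisors hd''.2)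
            (by have := Nat.pos_of_mem_divisors hd''.2; omega)
      · -- n is not a power of two
        apply Finset.dvd_sum
        intro d hd
        have hddvd := Nat.dvd_of_mem_divisors hd
        have hd0 : d ≠ 0 := (Nat.pos_of_mem_divisors hd).ne'
        rcases Nat.lt_or_ge d 3 with hlt | hge
        · -- d = 1 or 2 : n / d is not a power of two
          apply term_dvd_small n d hn0 hddvd hd0
          -- odd part of n / d equals odd part of n, which is > 1
          intro hc
          apply hm
          have hfd : (n / d).factorization 2 = a - d.factorization 2 := by
            rw [Nat.factorization_div hddvd]; simp [ha]
          -- n / d = 2 ^ (a - j) from hc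
          have ht0 : n / d ≠ 0 :=
            Nat.div_ne_zero_iff.mpr ⟨hd0, Nat.le_of_dvd (by omega) hddvd⟩
          have hnd : n / d = 2 ^ ((n / d).factorization 2) := by
            have := Nat.ordProj_mul_ordCompl_eq_self (n / d) 2
            rw [hc, mul_one] at this
            omega
          -- then n = d * 2 ^ (a - j), and d ∈ {1, 2}, so n is a power of 2
          have hn_eq : n = d * 2 ^ (a - d.factorization 2) := by
            rw [← hfd, ← hnd]
            exact (Nat.mul_div_cancel' hddvd).symm
          have hna : n = 2 ^ a := by
            have hd12 : d = 1 ∨ d = 2 := by omega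
            rcases hd12 with rfl | rfl
            · have h0 : (Nat.factorization 1) 2 = 0 := by simp
              rw [h0] at hn_eq
              rw [hn_eq, one_mul, Nat.sub_zero]
            · have h1 : (Nat.factorization 2) 2 = 1 := by
                simp [Nat.Prime.factorization Nat.prime_two]
              rw [h1] at hn_eq
              rw [hn_eq, ← pow_succ']
              congr 1
              have : 2 ∣ 2 ^ a := dvd_pow_self 2 (by omega)
              omega
          rw [hna, Nat.pow_div (le_refl a) (by norm_num)]
          simp
        · exact term_dvd_big n d hn0 hddvd hge
    -- conclude
    rw [← h] at claim
    obtain ⟨m, hmn⟩ := hpa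
    have hmodd : ¬ 2 ∣ m := by
      have := Nat.not_dvd_ordCompl Nat.prime_two hn0
      rw [← ha] at this
      have : m = n / 2 ^ a := by rw [hmn]; rw [Nat.mul_div_cancel_left m (by positivity)]
      rw [this]
      have h2 := Nat.not_dvd_ordCompl Nat.prime_two hn0
      rw [← ha] at h2
      exact h2
    obtain ⟨c, hc⟩ := claim
    rw [hmn, pow_succ] at hc
    have hmg : m * g = 2 * c := by
      have : 2 ^ a * (m * g) = 2 ^ a * (2 * c) := by rw [← mul_assoc, hc]; ring
      exact Nat.eq_of_mul_eq_mul_left (by positivity) this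
    have : 2 ∣ g := by
      have h2mg : 2 ∣ m * g := ⟨c, hmg⟩
      rcases (Nat.Prime.dvd_mul Nat.prime_two).mp h2mg with h | h
      · exact absurd h hmodd
      · exact h
    exact ⟨this.choose, by have := this.choose_spec; omega⟩


instance shiftAction (n : ℕ) [NeZero n] : AddAction (Fin n) (Fin n → ZMod 2) where
  vadd k x := fun i => x (i + k)
  zero_vadd x := by funext i; show x (i + 0) = x i; rw [add_zero]
  add_vadd k l x := by
    funext i
    show x (i + (k + l)) = x ((i + k) + l)
    rw [add_assoc]

lemma vadd_shift_def (n : ℕ) [NeZero n] (k : Fin n) (x : Fin n → ZMod 2) (i : Fin n) :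
    (k +ᵥ x) i = x (i + k) := rfl

open Fin.NatCast in
lemma shift_iterate (m : ℕ) (x : Fin (m+1) → ZMod 2) (j : ℕ) :
    (shift (m+1))^[j] x = ((j : Fin (m+1)) +ᵥ x) := by
  induction j with
  | zero => simp [zero_vadd]
  | succ j ih =>
    rw [Function.iterate_succ_apply', ih]
    funext i
    show ((j : Fin (m+1)) +ᵥ x) (finRotate (m+1) i) = x (i + ((j:ℕ)+1 : ℕ))
    rw [finRotate_succ_apply, vadd_shift_def]
    congr 1
    push_cast
    rw [add_assoc, add_comm (1 : Fin (m+1)) _]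

open Fin.NatCast in
lemma mem_orbit_iff' (m : ℕ) (x z : Fin (m+1) → ZMod 2) :
    z ∈ orbit (m+1) x ↔ ∃ k : Fin (m+1), k +ᵥ x = z := by
  unfold orbit
  simp only [Finset.mem_image, Finset.mem_univ, true_and]
  constructor
  · rintro ⟨k, rfl⟩
    exact ⟨k, by rw [shift_iterate, Fin.cast_val_eq_self]⟩
  · rintro ⟨k, rfl⟩
    exact ⟨k, by rw [shift_iterate, Fin.cast_val_eq_self]⟩

lemma orbit_eq_of_mem (m : ℕ) (x z : Fin (m+1) → ZMod 2) (hz : z ∈ orbit (m+1) x) :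
    orbit (m+1) z = orbit (m+1) x := by
  obtain ⟨k, rfl⟩ := (mem_orbit_iff' m x z).mp hz
  ext w
  rw [mem_orbit_iff', mem_orbit_iff']
  constructor
  · rintro ⟨l, rfl⟩
    exact ⟨l + k, by rw [add_vadd]⟩
  · rintro ⟨l, rfl⟩
    exact ⟨l - k, by rw [← add_vadd, sub_add_cancel]⟩

lemma orbit_eq_orbit (m : ℕ) (x : Fin (m+1) → ZMod 2) :
    (orbit (m+1) x : Set (Fin (m+1) → ZMod 2)) = AddAction.orbit (Fin (m+1)) x := by
  ext z
  rw [Finset.mem_coe, mem_orbit_iff']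
  simp [AddAction.mem_orbit_iff]

lemma numOrbits_eq_card_quotient (m : ℕ) :
    numOrbits (m+1) =
      Nat.card (AddAction.orbitRel.Quotient (Fin (m+1)) (Fin (m+1) → ZMod 2)) := by
  classical
  set Ω := AddAction.orbitRel.Quotient (Fin (m+1)) (Fin (m+1) → ZMod 2) with hΩ
  haveI : Fintype Ω := Fintype.ofFinite Ω
  have hwd : ∀ (x y : Fin (m+1) → ZMod 2),
      (AddAction.orbitRel (Fin (m+1)) (Fin (m+1) → ZMod 2)).r x y →
      orbit (m+1) x = orbit (m+1) y := by
    intro x y hxy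
    have : x ∈ AddAction.orbit (Fin (m+1)) y := hxy
    rw [← orbit_eq_orbit, Finset.mem_coe] at this
    exact orbit_eq_of_mem m y x this
  let F : Ω → Finset (Fin (m+1) → ZMod 2) := Quotient.lift (orbit (m+1)) hwd
  have hFinj : Function.Injective F := by
    intro ω₁ ω₂ h
    induction ω₁ using Quotient.ind
    induction ω₂ using Quotient.ind
    rename_i x y
    have hx : x ∈ orbit (m+1) x := by
      rw [mem_orbit_iff']; exact ⟨0, zero_vadd _ _⟩
    have : orbit (m+1) x = orbit (m+1) y := h
    rw [this, mem_orbit_iff'] at hx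
    obtain ⟨k, rfl⟩ := hx
    exact Quotient.sound (AddAction.mem_orbit y k)
  have himg : orbits (m+1) = Finset.image F Finset.univ := by
    unfold orbits
    have : Finset.image (Quotient.mk _) (Finset.univ : Finset (Fin (m+1) → ZMod 2)) =
        (Finset.univ : Finset Ω) :=
      Finset.image_univ_of_surjective (Quotient.mk_surjective)
    rw [← this, Finset.image_image]
    rfl
  rw [numOrbits, himg, Finset.card_image_of_injective _ hFinj, Finset.card_univ,
    Nat.card_eq_fintype_card]

noncomputable def fixedEquiv (m : ℕ) (k : Fin (m+1)) :
    (AddAction.fixedBy (Fin (m+1) → ZMod 2) k) ≃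
      ((Fin (m+1) ⧸ AddSubgroup.zmultiples k) → ZMod 2) where
  toFun x := Quotient.lift x.val (by
    intro i i' h
    have hc : -i + i' ∈ AddSubgroup.zmultiples k := (QuotientAddGroup.leftRel_apply).mp h
    have hfix : (-i + i') +ᵥ (x : Fin (m+1) → ZMod 2) = x :=
      vadd_eq_self_of_mem_zmultiples hc x.2
    have := congrFun hfix i
    rw [vadd_shift_def] at this
    rw [← this, add_neg_cancel_left])
  invFun g := ⟨fun i => g (QuotientAddGroup.mk i), by
    rw [AddAction.mem_fixedBy]
    funext i
    rw [vadd_shift_def]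
    have hmk : (QuotientAddGroup.mk (i + k) : Fin (m+1) ⧸ AddSubgroup.zmultiples k) =
        QuotientAddGroup.mk i := by
      rw [QuotientAddGroup.eq]
      have h1 : -(i + k) + i = -k := by abel
      rw [h1]
      exact AddSubgroup.neg_mem _ (AddSubgroup.mem_zmultiples k)
    show g (QuotientAddGroup.mk (i + k)) = g (QuotientAddGroup.mk i)
    rw [hmk]⟩
  left_inv x := by
    ext i
    rfl
  right_inv g := by
    funext q
    induction q using QuotientAddGroup.induction_on
    rfl

lemma card_fixedBy' (m : ℕ) (k : Fin (m+1)) :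
    Nat.card (AddAction.fixedBy (Fin (m+1) → ZMod 2) k) = 2 ^ Nat.gcd (m+1) k.val := by
  classical
  rw [Nat.card_congr (fixedEquiv m k)]
  rw [Nat.card_fun]
  have hZ : Nat.card (ZMod 2) = 2 := by simp [Nat.card_eq_fintype_card]
  have hord : addOrderOf k = (m+1) / Nat.gcd (m+1) k.val := by
    have h := ZMod.addOrderOf_coe k.val (n0 := Nat.succ_ne_zero m)
    have hk : ((k.val : ℕ) : ZMod m.succ) = k := ZMod.natCast_zmod_val (n := m.succ) k
    rwa [hk] at h
  have hH : Nat.card (AddSubgroup.zmultiples k) = (m+1) / Nat.gcd (m+1) k.val := by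
    rw [Nat.card_zmultiples, hord]
  have hlag : Nat.card (Fin (m+1)) =
      Nat.card (Fin (m+1) ⧸ AddSubgroup.zmultiples k) * Nat.card (AddSubgroup.zmultiples k) :=
    AddSubgroup.card_eq_card_quotient_mul_card_addSubgroup _
  have hcard : Nat.card (Fin (m+1)) = m + 1 := by simp
  have hgcd_dvd : Nat.gcd (m+1) k.val ∣ m + 1 := Nat.gcd_dvd_left _ _
  have hgpos : 0 < Nat.gcd (m+1) k.val := Nat.gcd_pos_of_pos_left _ (Nat.succ_pos m)
  have hQ : Nat.card (Fin (m+1) ⧸ AddSubgroup.zmultiples k) = Nat.gcd (m+1) k.val := by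
    rw [hH, hcard] at hlag
    have hdiv : (m+1) / Nat.gcd (m+1) k.val > 0 := Nat.div_pos (Nat.le_of_dvd (by omega) hgcd_dvd) hgpos
    have := Nat.div_div_self hgcd_dvd (Nat.succ_ne_zero m)
    -- hlag : m + 1 = Q * ((m+1)/g)
    have hQeq : Nat.card (Fin (m+1) ⧸ AddSubgroup.zmultiples k) = (m+1) / ((m+1) / Nat.gcd (m+1) k.val) :=
      (Nat.div_eq_of_eq_mul_left hdiv hlag).symm
    rw [hQeq, this]
  rw [hZ, hQ]

lemma burnside_count (m : ℕ) :
    (m+1) * numOrbits (m+1) = ∑ j ∈ range (m+1), 2 ^ Nat.gcd (m+1) j := by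
  classical
  haveI hfix : ∀ a : Fin (m+1), Fintype (AddAction.fixedBy (Fin (m+1) → ZMod 2) a) :=
    fun a => Fintype.ofFinite _
  haveI hΩ : Fintype (AddAction.orbitRel.Quotient (Fin (m+1)) (Fin (m+1) → ZMod 2)) :=
    Fintype.ofFinite _
  have hb := AddAction.sum_card_fixedBy_eq_card_orbits_mul_card_addGroup
    (Fin (m+1)) (Fin (m+1) → ZMod 2)
  have hL : ∑ a : Fin (m+1), Fintype.card (AddAction.fixedBy (Fin (m+1) → ZMod 2) a) =
      ∑ j ∈ range (m+1), 2 ^ Nat.gcd (m+1) j := by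
    rw [← Fin.sum_univ_eq_sum_range (fun j => 2 ^ Nat.gcd (m+1) j) (m+1)]
    refine Finset.sum_congr rfl fun a _ => ?_
    rw [← Nat.card_eq_fintype_card, card_fixedBy' m a]
  have hR : Fintype.card (AddAction.orbitRel.Quotient (Fin (m+1)) (Fin (m+1) → ZMod 2)) *
      Fintype.card (Fin (m+1)) = (m+1) * numOrbits (m+1) := by
    rw [numOrbits_eq_card_quotient, Nat.card_eq_fintype_card, Fintype.card_fin, mul_comm]
  rw [hL, hR] at hb
  exact hb.symm


/-- For every `n > 2`, the number of orbits of the cyclic shift action is even. -/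
theorem numOrbits_even (n : ℕ) (hn : 2 < n) : Even (numOrbits n) := by
  obtain ⟨m, rfl⟩ : ∃ m, n = m + 1 := ⟨n - 1, by omega⟩
  exact even_of_burnside (m+1) (numOrbits (m+1)) hn (burnside_count m)
end

section
/- Let n > 2, let rho be the cyclic shift on F_2^n, and let sigma = rho^k with k dividing n, so sigma has order d = n/k. Define S_sigma = sum over x in F_2^n of (-1)^(x·(sigma x)). If d is even then S_sigma = 2^(n/2 + n/d), and if d is odd then S_sigma = 0. -/
open Finset
open Fin.NatCast

lemma sgn_zero : sgn 0 = 1 := rfl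
lemma sgn_add (a b : ZMod 2) : sgn (a + b) = sgn a * sgn b := by revert a b; decide
lemma sgn_add_one (a : ZMod 2) : sgn (a + 1) = - sgn a := by revert a; decide

lemma sgn_sum {α : Type*} (s : Finset α) (f : α → ZMod 2) :
    sgn (∑ i ∈ s, f i) = ∏ i ∈ s, sgn (f i) := by
  classical
  induction s using Finset.cons_induction with
  | empty => simp [sgn_zero]
  | cons a s ha ih => rw [Finset.sum_cons, Finset.prod_cons, sgn_add, ih]

lemma sum_sgn_mul (w : ZMod 2) : ∑ c : ZMod 2, sgn (c * w) = if w = 0 then 2 else 0 := by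
  revert w; decide

lemma shift_iter (m k : ℕ) (x : Fin (m+1) → ZMod 2) (i : Fin (m+1)) :
    (shift (m+1))^[k] x i = x (i + (k : Fin (m+1))) := by
  induction k generalizing x i with
  | zero => simp
  | succ k ih =>
    rw [Function.iterate_succ_apply, ih]
    simp only [shift, finRotate_succ_apply, Nat.cast_succ]
    rw [add_assoc]

lemma fin_val_add {m : ℕ} (a b : Fin m) : (a + b).val = (a.val + b.val) % m := rfl

lemma fin_val_add_one {m : ℕ} (s : Fin (m+1)) : (s + 1).val = (s.val + 1) % (m+1) := by
  rw [fin_val_add, Fin.val_one']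
  conv_rhs => rw [Nat.add_mod]
  rw [Nat.mod_eq_of_lt s.isLt]


lemma dot_def (n : ℕ) (x y : Fin n → ZMod 2) : dot n x y = ∑ i, x i * y i := rfl
lemma zmod2_add_eq_zero (a b : ZMod 2) : a + b = 0 ↔ a = b := by revert a b; decide

lemma odd_case (m0 k : ℕ) (hk0 : 0 < k) (hk : k ∣ (m0+1)) (hd : Odd ((m0+1) / k)) :
    (∑ x : Fin (m0+1) → ZMod 2, sgn (dot (m0+1) x ((shift (m0+1))^[k] x))) = 0 := by
  set n := m0 + 1 with hn
  set d := n / k with hdd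
  have hnd : k * d = n := Nat.mul_div_cancel' hk
  have hσ : ∀ x : Fin n → ZMod 2, dot n x ((shift n)^[k] x) = ∑ i, x i * x (i + (k : Fin n)) := by
    intro x
    rw [dot_def]
    exact Finset.sum_congr rfl fun i _ => by
      rw [show (shift n)^[k] x i = x (i + (k : Fin n)) from shift_iter m0 k x i]
  set c : Fin n → ZMod 2 := fun i => if k ∣ i.val then 1 else 0 with hc
  have hvk : k ∣ (k : Fin n).val := by
    rw [Fin.val_natCast k n]
    exact (Nat.dvd_mod_iff hk).2 dvd_rfl
  -- c is shift-invariant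
  have hcs : ∀ i : Fin n, c (i + (k : Fin n)) = c i := by
    intro i
    have h1 : k ∣ ((i.val + (k : Fin n).val) % n) ↔ k ∣ i.val := by
      rw [Nat.dvd_mod_iff hk]
      exact ⟨fun h => by have := Nat.dvd_sub h hvk; simpa using this,
             fun h => Nat.dvd_add h hvk⟩
    simp only [hc, fin_val_add, h1]
  -- reindexing sum along i ↦ i + k
  have hre : ∀ x : Fin n → ZMod 2,
      (∑ i, c i * x (i + (k : Fin n))) = ∑ i, c i * x i := by
    intro x
    apply Fintype.sum_equiv (Equiv.addRight (k : Fin n))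
    intro i
    simp only [Equiv.coe_addRight]
    rw [hcs i]
  -- dot c c = 1
  have hcc : (∑ i, c i * c i) = 1 := by
    have h2 : ∀ i, c i * c i = c i := by
      intro i; simp only [hc]; split <;> simp
    rw [Finset.sum_congr rfl fun i _ => h2 i]
    have h3 : (∑ i, c i) = ((univ.filter fun i : Fin n => k ∣ i.val).card : ZMod 2) := by
      simp [hc, Finset.sum_boole]
    rw [h3]
    have h4 : (univ.filter fun i : Fin n => k ∣ i.val).card = d := by
      rw [← Fintype.card_subtype]
      have e : {i : Fin n // k ∣ i.val} ≃ Fin d :=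
        { toFun := fun p => ⟨p.1.val / k, by
            have := p.1.isLt
            rw [Nat.div_lt_iff_lt_mul hk0]
            have h5 : d * k = n := by rw [mul_comm]; exact hnd
            omega⟩
          invFun := fun t => ⟨⟨t.val * k, by
            have := t.isLt
            calc t.val * k < d * k := by
                  exact (Nat.mul_lt_mul_right hk0).2 this
              _ = n := by rw [mul_comm]; exact hnd⟩, dvd_mul_left k t.val⟩
          left_inv := fun p => by
            apply Subtype.ext; apply Fin.ext
            exact Nat.div_mul_cancel p.2
          right_inv := fun t => by
            apply Fin.ext
            simp [Nat.mul_div_cancel _ hk0] }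
      rw [Fintype.card_congr e, Fintype.card_fin]
    rw [h4]
    obtain ⟨r, hr⟩ := hd
    rw [hr]
    push_cast
    rw [show (2 : ZMod 2) = 0 by decide]
    ring
  -- the sign flip under x ↦ c + x
  have hflip : ∀ x : Fin n → ZMod 2,
      sgn (dot n (c + x) ((shift n)^[k] (c + x))) = - sgn (dot n x ((shift n)^[k] x)) := by
    intro x
    rw [hσ, hσ]
    have hexp : (∑ i, (c + x) i * (c + x) (i + (k : Fin n)))
        = (∑ i, c i * c i) + ((∑ i, c i * x (i + (k : Fin n))) + (∑ i, x i * c i))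
          + ∑ i, x i * x (i + (k : Fin n)) := by
      rw [← Finset.sum_add_distrib, ← Finset.sum_add_distrib, ← Finset.sum_add_distrib]
      apply Finset.sum_congr rfl
      intro i _
      simp only [Pi.add_apply, hcs i]
      ring
    rw [hexp, hcc]
    have hcancel : (∑ i, c i * x (i + (k : Fin n))) + (∑ i, x i * c i) = 0 := by
      rw [hre x, show (∑ i, x i * c i) = ∑ i, c i * x i from
        Finset.sum_congr rfl fun i _ => mul_comm _ _]
      exact CharTwo.add_self_eq_zero _
    rw [hcancel, add_zero, add_comm, sgn_add_one]
  -- conclude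
  have hS : (∑ x : Fin n → ZMod 2, sgn (dot n (c + x) ((shift n)^[k] (c + x))))
      = ∑ x : Fin n → ZMod 2, sgn (dot n x ((shift n)^[k] x)) :=
    Fintype.sum_equiv (Equiv.addLeft c) _ _ (fun x => rfl)
  rw [Finset.sum_congr rfl (fun x _ => hflip x), Finset.sum_neg_distrib] at hS
  omega

lemma even_case (m0 k : ℕ) (hk0 : 0 < k) (hk : k ∣ (m0+1)) (hd : Even ((m0+1) / k)) :
    (∑ x : Fin (m0+1) → ZMod 2, sgn (dot (m0+1) x ((shift (m0+1))^[k] x))) =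
      2 ^ ((m0+1) / 2 + (m0+1) / ((m0+1) / k)) := by
  set n := m0 + 1 with hn
  set d := n / k with hdd
  have hnd : k * d = n := Nat.mul_div_cancel' hk
  have hd0 : 0 < d := by
    rcases Nat.eq_zero_or_pos d with h | h
    · rw [h, mul_zero] at hnd; omega
    · exact h
  obtain ⟨m, hm⟩ : ∃ m, d = 2 * m := by
    obtain ⟨r, hr⟩ := hd; exact ⟨r, by omega⟩
  have hm0 : 0 < m := by omega
  have hn2 : n = 2 * (k * m) := by rw [← hnd, hm]; ring
  have hkn : k < n := by
    have h1 : k ≤ k * m := by simpa using Nat.mul_le_mul_left k hm0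
    omega
  -- exponent simplifications
  have hexp1 : n / 2 = k * m := by rw [hn2]; exact Nat.mul_div_cancel_left _ (by norm_num)
  have hexp2 : n / d = k := by rw [← hnd]; exact Nat.mul_div_cancel _ hd0
  have hσ : ∀ x : Fin n → ZMod 2, dot n x ((shift n)^[k] x) = ∑ i, x i * x (i + (k : Fin n)) := by
    intro x
    rw [dot_def]
    exact Finset.sum_congr rfl fun i _ => by
      rw [show (shift n)^[k] x i = x (i + (k : Fin n)) from shift_iter m0 k x i]
  haveI : NeZero m := ⟨by omega⟩
  -- index arithmetic helpers
  have key_lt : ∀ j t : ℕ, j < k → t < 2*m → j + t*k < n := by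
    intro j t hj ht
    calc j + t*k < k + t*k := Nat.add_lt_add_right hj _
      _ = (t+1)*k := by rw [Nat.succ_mul, Nat.add_comm]
      _ ≤ (2*m)*k := Nat.mul_le_mul_right k (by omega)
      _ = n := by rw [hn2]; ring
  set A := Fin k × Fin m with hA
  set eU : A → Fin n := fun p => ⟨p.1.val + (2*p.2.val)*k,
    key_lt _ _ p.1.isLt (by have := p.2.isLt; omega)⟩ with heU
  set eV : A → Fin n := fun p => ⟨p.1.val + (2*p.2.val+1)*k,
    key_lt _ _ p.1.isLt (by have := p.2.isLt; omega)⟩ with heV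
  have dec : ∀ j t j' t' : ℕ, j < k → j' < k → j + t*k = j' + t'*k → j = j' ∧ t = t' := by
    intro j t j' t' hj hj' h
    have h1 : (j + t*k) % k = j := by rw [Nat.add_mul_mod_self_right, Nat.mod_eq_of_lt hj]
    have h2 : (j' + t'*k) % k = j' := by rw [Nat.add_mul_mod_self_right, Nat.mod_eq_of_lt hj']
    have h3 : (j + t*k) / k = t := by
      rw [Nat.add_mul_div_right _ _ hk0, Nat.div_eq_of_lt hj, Nat.zero_add]
    have h4 : (j' + t'*k) / k = t' := by
      rw [Nat.add_mul_div_right _ _ hk0, Nat.div_eq_of_lt hj', Nat.zero_add]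
    constructor
    · rw [← h1, ← h2, h]
    · rw [← h3, ← h4, h]
  have hinj : Function.Injective (Sum.elim eU eV) := by
    intro a b hab
    rcases a with p | p <;> rcases b with q | q <;>
      simp only [Sum.elim_inl, Sum.elim_inr, heU, heV, Fin.mk.injEq] at hab
    · obtain ⟨h1, h2⟩ := dec _ _ _ _ p.1.isLt q.1.isLt hab
      congr 1
      exact Prod.ext (Fin.ext h1) (Fin.ext (by omega))
    · obtain ⟨h1, h2⟩ := dec _ _ _ _ p.1.isLt q.1.isLt hab
      omega
    · obtain ⟨h1, h2⟩ := dec _ _ _ _ p.1.isLt q.1.isLt hab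
      omega
    · obtain ⟨h1, h2⟩ := dec _ _ _ _ p.1.isLt q.1.isLt hab
      congr 1
      exact Prod.ext (Fin.ext h1) (Fin.ext (by omega))
  have hcard : Fintype.card (A ⊕ A) = Fintype.card (Fin n) := by
    simp only [Fintype.card_sum, Fintype.card_prod, Fintype.card_fin, hA]
    have : k * (2*m) = 2*(k*m) := by ring
    omega
  have hbij : Function.Bijective (Sum.elim eU eV) :=
    (Fintype.bijective_iff_injective_and_card _).2 ⟨hinj, hcard⟩
  set E : (A ⊕ A) ≃ Fin n := Equiv.ofBijective _ hbij with hE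
  have hEinl : ∀ p : A, E (Sum.inl p) = eU p := fun p => rfl
  have hEinr : ∀ p : A, E (Sum.inr p) = eV p := fun p => rfl
  have hkval : ((k : Fin n)).val = k := by
    rw [Fin.val_natCast k n]; exact Nat.mod_eq_of_lt hkn
  -- L1 : eU p + k = eV p
  have L1 : ∀ p : A, eU p + (k : Fin n) = eV p := by
    intro p
    apply Fin.ext
    rw [fin_val_add, hkval]
    simp only [heU, heV]
    rw [Nat.mod_eq_of_lt]
    · ring
    · have h := key_lt p.1.val (2*p.2.val+1) p.1.isLt (by have := p.2.isLt; omega)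
      have e : p.1.val + (2*p.2.val)*k + k = p.1.val + (2*p.2.val+1)*k := by ring
      omega
  -- L2 : eV p + k = eU (p.1, p.2 + 1)
  have L2 : ∀ p : A, eV p + (k : Fin n) = eU (p.1, p.2 + 1) := by
    intro p
    apply Fin.ext
    rw [fin_val_add, hkval]
    simp only [heU, heV]
    obtain ⟨m', rfl⟩ : ∃ m', m = m' + 1 := ⟨m - 1, by omega⟩
    rw [fin_val_add_one]
    rcases Nat.lt_or_ge (p.2.val + 1) (m' + 1) with hlt | hge
    · rw [Nat.mod_eq_of_lt hlt, Nat.mod_eq_of_lt]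
      · ring
      · have h := key_lt p.1.val (2*(p.2.val+1)) p.1.isLt (by omega)
        have e : p.1.val + (2*p.2.val+1)*k + k = p.1.val + (2*(p.2.val+1))*k := by ring
        omega
    · have heq : p.2.val + 1 = m' + 1 := by have := p.2.isLt; omega
      rw [heq, Nat.mod_self]
      have e : p.1.val + (2*p.2.val+1)*k + k = p.1.val + n := by
        rw [hn2]
        have h7 : p.2.val = m' := by omega
        rw [h7]; ring
      rw [e, Nat.add_mod_right, Nat.mod_eq_of_lt (lt_trans p.1.isLt hkn)]
      ring
  -- the pair-of-halves parametrization
  set Ψ : ((A → ZMod 2) × (A → ZMod 2)) ≃ (Fin n → ZMod 2) :=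
    (Equiv.sumArrowEquivProdArrow A A (ZMod 2)).symm.trans
      (Equiv.arrowCongr E (Equiv.refl (ZMod 2))) with hΨ
  have hΨval : ∀ (uv : (A → ZMod 2) × (A → ZMod 2)) (q : A ⊕ A),
      Ψ uv (E q) = Sum.elim uv.1 uv.2 q := by
    intro uv q
    simp [hΨ, Equiv.arrowCongr, Equiv.sumArrowEquivProdArrow]
  have hQ : ∀ u v : A → ZMod 2,
      (∑ i, (Ψ (u,v)) i * (Ψ (u,v)) (i + (k : Fin n)))
        = ∑ p : A, u p * (v p + v (p.1, p.2 - 1)) := by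
    intro u v
    have e0 : (∑ i, (Ψ (u,v)) i * (Ψ (u,v)) (i + (k : Fin n)))
        = ∑ q : A ⊕ A, (Ψ (u,v)) (E q) * (Ψ (u,v)) (E q + (k : Fin n)) :=
      (Fintype.sum_equiv E _ _ (fun q => rfl)).symm
    rw [e0, Fintype.sum_sum_type]
    have t1 : ∀ p : A, (Ψ (u,v)) (E (Sum.inl p)) * (Ψ (u,v)) (E (Sum.inl p) + (k : Fin n))
        = u p * v p := by
      intro p
      rw [hΨval (u,v) (Sum.inl p), hEinl p, L1 p, ← hEinr p, hΨval (u,v) (Sum.inr p)]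
      rfl
    have t2 : ∀ p : A, (Ψ (u,v)) (E (Sum.inr p)) * (Ψ (u,v)) (E (Sum.inr p) + (k : Fin n))
        = v p * u (p.1, p.2 + 1) := by
      intro p
      rw [hΨval (u,v) (Sum.inr p), hEinr p, L2 p, ← hEinl (p.1, p.2 + 1),
        hΨval (u,v) (Sum.inl (p.1, p.2 + 1))]
      rfl
    rw [Finset.sum_congr rfl (fun p _ => t1 p), Finset.sum_congr rfl (fun p _ => t2 p)]
    have t3 : (∑ p : A, v p * u (p.1, p.2 + 1)) = ∑ p : A, v (p.1, p.2 - 1) * u p := by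
      apply Fintype.sum_equiv (Equiv.prodCongr (Equiv.refl (Fin k)) (Equiv.addRight (1 : Fin m)))
      intro p
      cases p with
      | mk j s => simp [Prod.map]
    rw [t3, ← Finset.sum_add_distrib]
    exact Finset.sum_congr rfl fun p _ => by ring
  -- counting the kernel solutions
  have hcard2 : (univ.filter (fun v : A → ZMod 2 => ∀ p : A, v p + v (p.1, p.2 - 1) = 0)).card
      = 2^k := by
    rw [← Fintype.card_subtype]
    have e2 : {v : A → ZMod 2 // ∀ p : A, v p + v (p.1, p.2 - 1) = 0} ≃ (Fin k → ZMod 2) :=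
      { toFun := fun v => fun j => v.1 (j, 0)
        invFun := fun g => ⟨fun p => g p.1, fun p => CharTwo.add_self_eq_zero _⟩
        left_inv := fun v => by
          apply Subtype.ext
          funext p
          show v.1 (p.1, 0) = v.1 p
          have hstep : ∀ (j : Fin k) (s : Fin m), v.1 (j, s) = v.1 (j, s - 1) :=
            fun j s => (zmod2_add_eq_zero _ _).1 (v.2 (j, s))
          have hall : ∀ (t : ℕ) (j : Fin k), v.1 (j, (t : Fin m)) = v.1 (j, 0) := by
            intro t
            induction t with
            | zero => intro j; norm_num
            | succ t ih =>
              intro j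
              have h8 : ((t+1 : ℕ) : Fin m) - 1 = ((t : ℕ) : Fin m) := by push_cast; exact add_sub_cancel_right _ _
              rw [hstep j ((t+1 : ℕ) : Fin m), h8, ih j]
          have h9 := hall p.2.val p.1
          rw [Fin.cast_val_eq_self] at h9
          exact h9.symm
        right_inv := fun g => rfl }
    rw [Fintype.card_congr e2]
    simp
  -- main computation
  rw [hexp1, hexp2]
  calc (∑ x : Fin n → ZMod 2, sgn (dot n x ((shift n)^[k] x)))
      = ∑ uv : (A → ZMod 2) × (A → ZMod 2), sgn (dot n (Ψ uv) ((shift n)^[k] (Ψ uv))) :=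
        (Fintype.sum_equiv Ψ _ _ (fun uv => rfl)).symm
    _ = ∑ u : A → ZMod 2, ∑ v : A → ZMod 2, ∏ p : A, sgn (u p * (v p + v (p.1, p.2 - 1))) := by
        rw [Fintype.sum_prod_type]
        refine Finset.sum_congr rfl fun u _ => Finset.sum_congr rfl fun v _ => ?_
        rw [hσ, hQ u v, sgn_sum]
    _ = ∑ v : A → ZMod 2, ∑ u : A → ZMod 2, ∏ p : A, sgn (u p * (v p + v (p.1, p.2 - 1))) :=
        Finset.sum_comm
    _ = ∑ v : A → ZMod 2, ∏ p : A, (if (v p + v (p.1, p.2 - 1)) = 0 then (2:ℤ) else 0) := by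
        refine Finset.sum_congr rfl fun v _ => ?_
        rw [← Fintype.prod_sum (fun (p : A) (c : ZMod 2) => sgn (c * (v p + v (p.1, p.2 - 1))))]
        exact Finset.prod_congr rfl fun p _ => sum_sgn_mul _
    _ = ∑ v : A → ZMod 2,
          (if (∀ p : A, v p + v (p.1, p.2 - 1) = 0) then (2:ℤ)^(k*m) else 0) := by
        refine Finset.sum_congr rfl fun v _ => ?_
        by_cases h : ∀ p : A, v p + v (p.1, p.2 - 1) = 0
        · rw [if_pos h, Finset.prod_congr rfl (fun p _ => if_pos (h p)), Finset.prod_const]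
          congr 1
          simp [hA]
        · rw [if_neg h]
          push_neg at h
          obtain ⟨p0, hp0⟩ := h
          exact Finset.prod_eq_zero (Finset.mem_univ p0) (if_neg hp0)
    _ = ((univ.filter (fun v : A → ZMod 2 =>
            ∀ p : A, v p + v (p.1, p.2 - 1) = 0)).card : ℤ) * 2^(k*m) := by
        rw [← Finset.sum_filter, Finset.sum_const, nsmul_eq_mul]
    _ = 2^(k*m + k) := by
        rw [hcard2]
        push_cast
        rw [pow_add]
        ring


/-- Value of `S_σ = ∑_x (-1)^(x·σx)` for `σ = ρ^k` with `k ∣ n`, where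
`σ` has order `d = n/k`. -/
theorem S_sigma_of_dvd (n k : ℕ) (hn : 2 < n) (hk0 : 0 < k) (hk : k ∣ n) :
    (Even (n / k) →
      (∑ x : Fin n → ZMod 2, sgn (dot n x ((shift n)^[k] x))) =
        2 ^ (n / 2 + n / (n / k))) ∧
    (Odd (n / k) →
      (∑ x : Fin n → ZMod 2, sgn (dot n x ((shift n)^[k] x))) = 0) := by
  obtain ⟨m0, rfl⟩ : ∃ m0, n = m0 + 1 := ⟨n - 1, by omega⟩
  exact ⟨fun h => even_case m0 k hk0 hk h, fun h => odd_case m0 k hk0 hk h⟩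
end
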